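/- For every t ≥ 4, the graph B_t is not b-monotone: B_t has an induced subgraph H with b(H) > b(B_t). -/

import Mathlib

open SimpleGraph

/-- The degree of a vertex `v` in a simple graph `G`. -/
noncomputable def vdeg {V : Type*} (G : SimpleGraph V) (v : V) : ℕ :=
  Nat.card {w // G.Adj v w}

/-- A Grundy coloring of `G` with `k` colors: a proper coloring whose `k` color classes are
all nonempty (surjectivity) and such that every vertex of a class has a neighbor in every
smaller-indexed class. -/
def IsGrundyColoring {V : Type*} (G : SimpleGraph V) {k : ℕ} (C : V → Fin k) : Prop :=
  (∀ v w, G.Adj v w → C v ≠ C w) ∧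
  Function.Surjective C ∧
  (∀ v : V, ∀ i : Fin k, i < C v → ∃ w, G.Adj v w ∧ C w = i)

/-- The Grundy number of `G`: the largest `k` admitting a Grundy coloring with `k` colors. -/
noncomputable def grundyNum {V : Type*} (G : SimpleGraph V) : ℕ :=
  sSup {k | ∃ C : V → Fin k, IsGrundyColoring G C}

/-- A b-coloring of `G` with `k` colors: a proper coloring such that every color class
contains a vertex having a neighbor in each of the other classes (hence all classes are
nonempty). -/
def IsBColoring {V : Type*} (G : SimpleGraph V) {k : ℕ} (C : V → Fin k) : Prop :=
  (∀ v w, G.Adj v w → C v ≠ C w) ∧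
  (∀ i : Fin k, ∃ v, C v = i ∧ ∀ j : Fin k, j ≠ i → ∃ w, G.Adj v w ∧ C w = j)

/-- The b-chromatic number of `G`: the largest `k` admitting a b-coloring with `k` colors. -/
noncomputable def bChrom {V : Type*} (G : SimpleGraph V) : ℕ :=
  sSup {k | ∃ C : V → Fin k, IsBColoring G C}

/-- The graph `B_t`: the complete bipartite graph `K_{t,t}` on parts `{u_1,…,u_t}` and
`{w_1,…,w_t}` minus a matching of size `t - 1`; `u_i` is adjacent to `w_j` iff `i ≠ j`
or `i = j` is the last index. -/
def Bgraph (t : ℕ) : SimpleGraph (Fin t ⊕ Fin t) :=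
  SimpleGraph.fromRel (fun a b =>
    match a, b with
    | Sum.inl i, Sum.inr j => i ≠ j ∨ (i = j ∧ (i : ℕ) = t - 1)
    | _, _ => False)

/-!
A b-coloring with a third color `f` needs a vertex of color `f` seeing both colors `C u_t`
and `C w_t`. In `B_t` this is impossible: `u_t` and `w_t` dominate the opposite sides, so
the neighbours of a left vertex all avoid the color of `u_t`, and those of a right vertex
avoid the color of `w_t`. Hence `b(B_t) ≤ 2`. On the other hand, as `t ≥ 4`, the vertices
with index `< 3` induce `K_{3,3}` minus a perfect matching, which is b-colored by the index.
-/

section BColoring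

variable {V : Type*} {G : SimpleGraph V} {k : ℕ} {C : V → Fin k}

theorem IsBColoring.le_card [Finite V] (hC : IsBColoring G C) : k ≤ Nat.card V := by
  choose g hg using fun i => (hC.2 i).imp fun _ hv => hv.1
  have hg_inj : Function.Injective g := fun i j hij => by rw [← hg i, ← hg j, hij]
  simpa using Nat.card_le_card_of_injective g hg_inj

theorem IsBColoring.le_bChrom [Finite V] (hC : IsBColoring G C) : k ≤ bChrom G :=
  le_csSup ⟨Nat.card V, fun _ ⟨_, hC'⟩ => hC'.le_card⟩ ⟨C, hC⟩

theorem bChrom_le {m : ℕ} (h : ∀ k (C : V → Fin k), IsBColoring G C → k ≤ m) :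
    bChrom G ≤ m :=
  csSup_le' fun k ⟨C, hC⟩ => h k C hC

theorem IsBColoring.le_two_of_dominating (hC : IsBColoring G C) (side : V → Bool)
    (hside : ∀ v w, G.Adj v w → side v ≠ side w) (a b : V) (hab : side a ≠ side b)
    (ha : ∀ v, side v ≠ side a → G.Adj a v) (hb : ∀ v, side v ≠ side b → G.Adj b v) :
    k ≤ 2 := by
  by_contra! hk
  have avoids (x : V) (hx : ∀ u, side u ≠ side x → G.Adj x u) (v : V) (hv : side v = side x)
      (w : V) (hvw : G.Adj v w) : C w ≠ C x :=
    (hC.1 x w (hx w (hv ▸ hside v w hvw).symm)).symm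
  obtain ⟨f, hfa, hfb⟩ := Fin.exists_ne_and_ne_of_two_lt (C a) (C b) hk
  obtain ⟨v, rfl, hv⟩ := hC.2 f
  by_cases hva : side v = side a
  · obtain ⟨w, hvw, hw⟩ := hv (C a) hfa.symm
    exact avoids a ha v hva w hvw hw
  · have hvb : side v = side b := by revert hva hab; cases side v <;> cases side a <;> simp
    obtain ⟨w, hvw, hw⟩ := hv (C b) hfb.symm
    exact avoids b hb v hvb w hvw hw

end BColoring

section Bgraph

variable {t : ℕ}

theorem bgraph_adj_inl_inr (i j : Fin t) :
    (Bgraph t).Adj (.inl i) (.inr j) ↔ i ≠ j ∨ (i = j ∧ (i : ℕ) = t - 1) := by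
  simp [Bgraph]

theorem bgraph_isLeft_ne_of_adj {v w : Fin t ⊕ Fin t} (h : (Bgraph t).Adj v w) :
    v.isLeft ≠ w.isLeft := by
  rcases v with i | i <;> rcases w with j | j <;> simp_all [Bgraph]

theorem bgraph_adj_last_inr (ht : 0 < t) (j : Fin t) :
    (Bgraph t).Adj (.inl ⟨t - 1, by omega⟩) (.inr j) := by
  rw [bgraph_adj_inl_inr]
  tauto

theorem bgraph_adj_inl_last (ht : 0 < t) (i : Fin t) :
    (Bgraph t).Adj (.inl i) (.inr ⟨t - 1, by omega⟩) := by
  rw [bgraph_adj_inl_inr]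
  by_cases h : i = ⟨t - 1, by omega⟩ <;> simp [h]

theorem bChrom_bgraph_le_two (t : ℕ) : bChrom (Bgraph t) ≤ 2 := by
  refine bChrom_le fun k C hC => ?_
  rcases Nat.eq_zero_or_pos t with rfl | ht
  · have : k ≤ 0 := by simpa using hC.le_card
    omega
  · refine hC.le_two_of_dominating Sum.isLeft (fun _ _ => bgraph_isLeft_ne_of_adj)
      (.inl ⟨t - 1, by omega⟩) (.inr ⟨t - 1, by omega⟩) (by simp) ?_ ?_
    · rintro (i | j) h
      · simp at h
      · exact bgraph_adj_last_inr ht j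
    · rintro (i | j) h
      · exact (bgraph_adj_inl_last ht i).symm
      · simp at h

/-- The common index of `u_i` and `w_i`. -/
def bgraphIndex : Fin t ⊕ Fin t → Fin t := Sum.elim id id

theorem bgraphIndex_ne_of_adj {v w : Fin t ⊕ Fin t} (hv : (bgraphIndex v : ℕ) < t - 1)
    (h : (Bgraph t).Adj v w) : bgraphIndex v ≠ bgraphIndex w := by
  rcases v with i | i <;> rcases w with j | j
  · simp [Bgraph] at h
  · simp only [bgraphIndex, Sum.elim_inl, Sum.elim_inr, id] at hv ⊢
    rw [bgraph_adj_inl_inr] at h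
    omega
  · simp only [bgraphIndex, Sum.elim_inl, Sum.elim_inr, id] at hv ⊢
    rw [(Bgraph t).adj_comm, bgraph_adj_inl_inr] at h
    omega
  · simp [Bgraph] at h

theorem isBColoring_induce_bgraphIndex_lt {m : ℕ} (hm : m < t) :
    IsBColoring ((Bgraph t).induce {x | (bgraphIndex x : ℕ) < m})
      (fun v => ⟨bgraphIndex v.1, v.2⟩) := by
  constructor
  · rintro v w h
    have hv : (bgraphIndex v.1 : ℕ) < m := v.2
    simpa [Fin.ext_iff] using bgraphIndex_ne_of_adj (by omega : (bgraphIndex v.1 : ℕ) < t - 1) h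
  · intro c
    refine ⟨⟨.inl ⟨c, by omega⟩, c.2⟩, rfl, fun d hd => ⟨⟨.inr ⟨d, by omega⟩, d.2⟩, ?_, rfl⟩⟩
    exact (bgraph_adj_inl_inr _ _).2 (.inl fun h => hd (by simpa [Fin.ext_iff] using h.symm))

end Bgraph

/-- For every `t ≥ 4`, the graph `B_t` is not b-monotone: it has an induced subgraph `H`
with `b(H) > b(B_t)`. -/
theorem stmt11 (t : ℕ) (ht : 4 ≤ t) :
    ∃ s : Set (Fin t ⊕ Fin t), bChrom (Bgraph t) < bChrom ((Bgraph t).induce s) :=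
  ⟨{x | (bgraphIndex x : ℕ) < 3}, (bChrom_bgraph_le_two t).trans_lt
    (isBColoring_induce_bgraphIndex_lt (by omega)).le_bChrom⟩
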